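/- arXiv:1802.03977 — 2 statements merged into one kernel-verified Lean document; each statement's English description precedes it below -/
import Mathlib

section
/- Let X be a metric space written as a finite union X = A ∪ B₁ ∪ ... ∪ B_k of closed sets, and let F : X → Y be a map into a metric space such that the restriction of F to A and to each closure of B_i is L-Lipschitz, and the B_i are pairwise disjoint open sets with boundaries contained in A, and X is a geodesic metric space. Then F is L-Lipschitz on all of X. -/
/-!
Along a geodesic from `x` to `y`, the times at which it leaves `⋃ i, B i` (and so lies in `A`)
form a closed set. Between the first and the last such time we use the Lipschitz bound on `A`.
Before the first and after the last one, the geodesic runs through `⋃ i, B i`; being connected,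
each of these two pieces stays in a single `B i`, whose closure then contains the piece together
with its endpoints. Distances add up along a geodesic, so the three bounds add up to `L * dist x y`.
-/

open Set Function NNReal

section Gluing

variable {X Y : Type*}

theorem IsPreconnected.exists_subset_of_subset_iUnion [TopologicalSpace X] {ι : Type*}
    {B : ι → Set X} (hBopen : ∀ i, IsOpen (B i)) (hBdisj : Pairwise (Disjoint on B))
    {S : Set X} (hS : IsPreconnected S) (hSne : S.Nonempty) (hSB : S ⊆ ⋃ i, B i) :
    ∃ i, S ⊆ B i := by
  obtain ⟨x, hxS⟩ := hSne
  obtain ⟨i, hxi⟩ := mem_iUnion.1 (hSB hxS)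
  refine ⟨i, hS.subset_left_of_subset_union (hBopen i) (isOpen_biUnion fun j _ => hBopen j)
    (disjoint_iUnion₂_right.2 fun j hji => hBdisj (Ne.symm hji)) ?_ ⟨x, hxS, hxi⟩⟩
  intro y hy
  obtain ⟨j, hyj⟩ := mem_iUnion.1 (hSB hy)
  by_cases hji : j = i
  · exact Or.inl (hji ▸ hyj)
  · exact Or.inr (mem_biUnion hji hyj)

theorem exists_image_Icc_subset_closure [TopologicalSpace X] {ι : Type*} {B : ι → Set X}
    (hBopen : ∀ i, IsOpen (B i)) (hBdisj : Pairwise (Disjoint on B)) {γ : ℝ → X} {a b : ℝ}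
    (hab : a < b) (hγ : ContinuousOn γ (Icc a b)) (hγB : γ '' Ioo a b ⊆ ⋃ i, B i) :
    ∃ i, γ '' Icc a b ⊆ closure (B i) := by
  rw [← closure_Ioo hab.ne] at hγ ⊢
  have hconn : IsPreconnected (γ '' Ioo a b) :=
    isPreconnected_Ioo.image γ (hγ.mono subset_closure)
  obtain ⟨i, hi⟩ :=
    hconn.exists_subset_of_subset_iUnion hBopen hBdisj ((nonempty_Ioo.2 hab).image γ) hγB
  exact ⟨i, hγ.image_closure.trans (closure_mono hi)⟩

section PseudoMetric

variable [PseudoMetricSpace X] [PseudoMetricSpace Y]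

theorem dist_le_mul_of_dist_eq_add {F : X → Y} {L : ℝ≥0} {p q r : X}
    (hpqr : dist p r = dist p q + dist q r) (hpq : dist (F p) (F q) ≤ L * dist p q)
    (hqr : dist (F q) (F r) ≤ L * dist q r) : dist (F p) (F r) ≤ L * dist p r :=
  calc dist (F p) (F r) ≤ dist (F p) (F q) + dist (F q) (F r) := dist_triangle _ _ _
    _ ≤ L * dist p q + L * dist q r := add_le_add hpq hqr
    _ = L * dist p r := by rw [hpqr, mul_add]

theorem dist_map_le_of_image_Ioo_subset_iUnion {ι : Type*} {B : ι → Set X} {F : X → Y}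
    {L : ℝ≥0} (hBopen : ∀ i, IsOpen (B i)) (hBdisj : Pairwise (Disjoint on B))
    (hFB : ∀ i, LipschitzOnWith L F (closure (B i))) {γ : ℝ → X} {a b : ℝ} (hab : a ≤ b)
    (hγ : ContinuousOn γ (Icc a b)) (hγB : γ '' Ioo a b ⊆ ⋃ i, B i) :
    dist (F (γ a)) (F (γ b)) ≤ L * dist (γ a) (γ b) := by
  rcases hab.eq_or_lt with rfl | hab
  · simp
  obtain ⟨i, hi⟩ := exists_image_Icc_subset_closure hBopen hBdisj hab hγ hγB
  exact (hFB i).dist_le_mul _ (hi (mem_image_of_mem γ (left_mem_Icc.2 hab.le)))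
    _ (hi (mem_image_of_mem γ (right_mem_Icc.2 hab.le)))

theorem dist_map_le_of_straight_path {ι : Type*} {A : Set X} {B : ι → Set X} {F : X → Y}
    {L : ℝ≥0} (hBopen : ∀ i, IsOpen (B i)) (hBdisj : Pairwise (Disjoint on B))
    (hcover : A ∪ ⋃ i, B i = univ) (hFA : LipschitzOnWith L F A)
    (hFB : ∀ i, LipschitzOnWith L F (closure (B i))) {γ : ℝ → X} {a b : ℝ} (hab : a ≤ b)
    (hγ : ContinuousOn γ (Icc a b))
    (hstraight : ∀ s ∈ Icc a b, ∀ t ∈ Icc a b, ∀ u ∈ Icc a b, s ≤ t → t ≤ u →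
      dist (γ s) (γ u) = dist (γ s) (γ t) + dist (γ t) (γ u)) :
    dist (F (γ a)) (F (γ b)) ≤ L * dist (γ a) (γ b) := by
  set Z := Icc a b ∩ γ ⁻¹' (⋃ i, B i)ᶜ
  have hZ : IsClosed Z :=
    hγ.preimage_isClosed_of_isClosed isClosed_Icc (isOpen_iUnion hBopen).isClosed_compl
  have hZA : ∀ t ∈ Z, γ t ∈ A := fun t ht =>
    (hcover.symm ▸ mem_univ (γ t) : γ t ∈ A ∪ ⋃ i, B i).resolve_right ht.2
  have segment : ∀ s t, a ≤ s → s ≤ t → t ≤ b → (∀ u ∈ Ioo s t, u ∉ Z) →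
      dist (F (γ s)) (F (γ t)) ≤ L * dist (γ s) (γ t) := by
    intro s t has hst htb hsZ
    refine dist_map_le_of_image_Ioo_subset_iUnion hBopen hBdisj hFB hst
      (hγ.mono (Icc_subset_Icc has htb)) ?_
    rintro _ ⟨u, hu, rfl⟩
    by_contra hγu
    exact hsZ u hu ⟨⟨has.trans hu.1.le, hu.2.le.trans htb⟩, hγu⟩
  rcases Z.eq_empty_or_nonempty with hZ₀ | hZne
  · exact segment a b le_rfl hab le_rfl fun u _ hu => hZ₀.subset hu
  have hbddBelow : BddBelow Z := ⟨a, fun t ht => ht.1.1⟩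
  have hbddAbove : BddAbove Z := ⟨b, fun t ht => ht.1.2⟩
  set s₀ := sInf Z
  set s₁ := sSup Z
  have hs₀ : s₀ ∈ Z := hZ.csInf_mem hZne hbddBelow
  have hs₁ : s₁ ∈ Z := hZ.csSup_mem hZne hbddAbove
  have hs₀s₁ : s₀ ≤ s₁ := csInf_le_csSup hZne hbddBelow hbddAbove
  have first : dist (F (γ a)) (F (γ s₀)) ≤ L * dist (γ a) (γ s₀) :=
    segment a s₀ le_rfl hs₀.1.1 hs₀.1.2 fun u hu huZ => (csInf_le hbddBelow huZ).not_gt hu.2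
  have middle : dist (F (γ s₀)) (F (γ s₁)) ≤ L * dist (γ s₀) (γ s₁) :=
    hFA.dist_le_mul _ (hZA s₀ hs₀) _ (hZA s₁ hs₁)
  have last : dist (F (γ s₁)) (F (γ b)) ≤ L * dist (γ s₁) (γ b) :=
    segment s₁ b hs₁.1.1 hs₁.1.2 le_rfl fun u hu huZ => (le_csSup hbddAbove huZ).not_gt hu.1
  have ha : a ∈ Icc a b := left_mem_Icc.2 hab
  have hb : b ∈ Icc a b := right_mem_Icc.2 hab
  exact dist_le_mul_of_dist_eq_add (hstraight a ha s₀ hs₀.1 b hb hs₀.1.1 hs₀.1.2) first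
    (dist_le_mul_of_dist_eq_add (hstraight s₀ hs₀.1 s₁ hs₁.1 b hb hs₀s₁ hs₁.1.2)
      middle last)

end PseudoMetric

end Gluing

theorem lipschitz_gluing_general
    {X Y : Type*} [MetricSpace X] [MetricSpace Y]
    (hgeo : ∀ x y : X, ∃ γ : ℝ → X, γ 0 = x ∧ γ 1 = y ∧
      ∀ s ∈ Set.Icc (0:ℝ) 1, ∀ t ∈ Set.Icc (0:ℝ) 1, dist (γ s) (γ t) = |s - t| * dist x y)
    (k : ℕ) (A : Set X) (B : Fin k → Set X)
    (hBopen : ∀ i, IsOpen (B i))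
    (hBdisj : ∀ i j, i ≠ j → Disjoint (B i) (B j))
    (hcover : A ∪ ⋃ i, B i = Set.univ)
    (L : NNReal) (F : X → Y)
    (hFA : LipschitzOnWith L F A)
    (hFB : ∀ i, LipschitzOnWith L F (closure (B i))) :
    LipschitzWith L F := by
  refine LipschitzWith.of_dist_le_mul fun x y => ?_
  obtain ⟨γ, rfl, rfl, hγ⟩ := hgeo x y
  have hγcont : ContinuousOn γ (Icc 0 1) :=
    (LipschitzOnWith.of_dist_le_mul (K := nndist (γ 0) (γ 1)) fun s hs t ht => by
      rw [hγ s hs t ht, Real.dist_eq, coe_nndist, mul_comm]).continuousOn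
  have hstraight : ∀ s ∈ Icc (0 : ℝ) 1, ∀ t ∈ Icc (0 : ℝ) 1, ∀ u ∈ Icc (0 : ℝ) 1,
      s ≤ t → t ≤ u → dist (γ s) (γ u) = dist (γ s) (γ t) + dist (γ t) (γ u) := by
    intro s hs t ht u hu hst htu
    rw [hγ s hs u hu, hγ s hs t ht, hγ t ht u hu, ← add_mul]
    congr 1
    grind
  exact dist_map_le_of_straight_path hBopen hBdisj hcover hFA hFB zero_le_one hγcont hstraight

theorem lipschitz_gluing
    {X Y : Type*} [MetricSpace X] [MetricSpace Y]
    (hgeo : ∀ x y : X, ∃ γ : ℝ → X, γ 0 = x ∧ γ 1 = y ∧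
      ∀ s ∈ Set.Icc (0:ℝ) 1, ∀ t ∈ Set.Icc (0:ℝ) 1, dist (γ s) (γ t) = |s - t| * dist x y)
    (k : ℕ) (A : Set X) (B : Fin k → Set X)
    (hA : IsClosed A) (hBopen : ∀ i, IsOpen (B i))
    (hBdisj : ∀ i j, i ≠ j → Disjoint (B i) (B j))
    (hfront : ∀ i, frontier (B i) ⊆ A)
    (hcover : A ∪ ⋃ i, B i = Set.univ)
    (L : NNReal) (F : X → Y)
    (hFA : LipschitzOnWith L F A)
    (hFB : ∀ i, LipschitzOnWith L F (closure (B i))) :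
    LipschitzWith L F :=
  lipschitz_gluing_general hgeo k A B hBopen hBdisj hcover L F hFA hFB
end

section
/- Let f : I → J be a bijection between bounded intervals that is differentiable with derivative satisfying 0 < m ≤ f'(x) ≤ M and distortion bound f'(x)/f'(y) ≤ D for all x, y ∈ I. Then for any measurable set E ⊂ I, the relative measures satisfy λ(f(E))/λ(J) ≥ (1/D) · λ(E)/λ(I). -/
open MeasureTheory Set

theorem bounded_distortion_density
    (a b c d m M D : ℝ) (hab : a < b) (hcd : c < d)
    (hm : 0 < m) (hD : 0 < D)
    (f f' : ℝ → ℝ)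
    (hf : ∀ x ∈ Icc a b, HasDerivWithinAt f (f' x) (Icc a b) x)
    (hlow : ∀ x ∈ Icc a b, m ≤ f' x)
    (hup : ∀ x ∈ Icc a b, f' x ≤ M)
    (hdist : ∀ x ∈ Icc a b, ∀ y ∈ Icc a b, f' x / f' y ≤ D)
    (hbij : Set.BijOn f (Icc a b) (Icc c d))
    (E : Set ℝ) (hE : MeasurableSet E) (hEI : E ⊆ Icc a b) :
    (ENNReal.ofReal D)⁻¹ * (volume E / volume (Icc a b))
      ≤ volume (f '' E) / volume (Icc c d) := by
  have key : ∀ (s : Set ℝ), MeasurableSet s → s ⊆ Icc a b →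
      (∫⁻ x in s, ENNReal.ofReal |f' x|) = volume (f '' s) := by
    intro s hs hsub
    have hd : ∀ x ∈ s, HasDerivWithinAt f (f' x) s x := fun x hx =>
      (hf x (hsub hx)).mono hsub
    have hinj : InjOn f s := hbij.injOn.mono hsub
    simpa only [ContinuousLinearMap.det_toSpanSingleton] using
      lintegral_abs_det_fderiv_eq_addHaar_image volume hs
        (fun x hx => (hd x hx).hasFDerivWithinAt) hinj
  have habs : ∀ x ∈ Icc a b, |f' x| = f' x := fun x hx =>
    abs_of_pos (lt_of_lt_of_le hm (hlow x hx))
  -- notations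
  set VI := volume (Icc a b) with hVI
  set VJ := volume (Icc c d) with hVJ
  set DD := ENNReal.ofReal D with hDD
  have hVIval : VI = ENNReal.ofReal (b - a) := by rw [hVI, Real.volume_Icc]
  have hVJval : VJ = ENNReal.ofReal (d - c) := by rw [hVJ, Real.volume_Icc]
  have hVI0 : VI ≠ 0 := by
    rw [hVIval]; simpa using sub_pos.mpr hab
  have hVItop : VI ≠ ⊤ := by rw [hVIval]; exact ENNReal.ofReal_ne_top
  have hVJ0 : VJ ≠ 0 := by
    rw [hVJval]; simpa using sub_pos.mpr hcd
  have hVJtop : VJ ≠ ⊤ := by rw [hVJval]; exact ENNReal.ofReal_ne_top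
  have hDD0 : DD ≠ 0 := by
    rw [hDD]; simpa using hD
  have hDDtop : DD ≠ ⊤ := ENNReal.ofReal_ne_top
  -- J = ∫_I f'
  have hJ : (∫⁻ x in Icc a b, ENNReal.ofReal |f' x|) = VJ := by
    rw [key (Icc a b) measurableSet_Icc subset_rfl, hbij.image_eq]
  -- pointwise lower bound for f' on I
  have hpt : ∀ x ∈ Icc a b, VJ / (DD * VI) ≤ ENNReal.ofReal (f' x) := by
    intro x hx
    have hub : ∀ y ∈ Icc a b, f' y ≤ D * f' x := by
      intro y hy
      have := hdist y hy x hx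
      have hfx : 0 < f' x := lt_of_lt_of_le hm (hlow x hx)
      exact (div_le_iff₀ hfx).mp this
    have h1 : VJ ≤ ENNReal.ofReal (D * f' x) * VI := by
      rw [← hJ]
      calc ∫⁻ y in Icc a b, ENNReal.ofReal |f' y|
          ≤ ∫⁻ _ in Icc a b, ENNReal.ofReal (D * f' x) := by
            apply setLIntegral_mono' measurableSet_Icc
            intro y hy
            rw [habs y hy]
            exact ENNReal.ofReal_le_ofReal (hub y hy)
        _ = ENNReal.ofReal (D * f' x) * VI := by
            rw [setLIntegral_const]
    have h2 : ENNReal.ofReal (D * f' x) = DD * ENNReal.ofReal (f' x) := by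
      rw [hDD, ENNReal.ofReal_mul hD.le]
    rw [h2, mul_comm DD, mul_assoc] at h1
    exact ENNReal.div_le_of_le_mul' (by rwa [mul_comm (ENNReal.ofReal (f' x))] at h1)
  -- lower bound for volume (f '' E)
  have hFE : VJ / (DD * VI) * volume E ≤ volume (f '' E) := by
    rw [← key E hE hEI]
    calc VJ / (DD * VI) * volume E
        = ∫⁻ _ in E, VJ / (DD * VI) := by rw [setLIntegral_const]
      _ ≤ ∫⁻ x in E, ENNReal.ofReal |f' x| := by
          apply setLIntegral_mono' hE
          intro x hx
          rw [habs x (hEI hx)]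
          exact hpt x (hEI hx)
  rw [ENNReal.le_div_iff_mul_le (Or.inl hVJ0) (Or.inl hVJtop)]
  calc DD⁻¹ * (volume E / VI) * VJ
      = VJ / (DD * VI) * volume E := by
        rw [ENNReal.div_eq_inv_mul, ENNReal.div_eq_inv_mul,
          ENNReal.mul_inv (Or.inl hDD0) (Or.inl hDDtop)]
        ring
    _ ≤ volume (f '' E) := hFE
end
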